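/- Zeilberger recurrence for the nonterminating Saalschützian series: let a, b, c, e ∈ ℂ and n, k ∈ ℕ. Define f(n,k) := (a)_k (b)_k (c+n)_k / ((e)_k (a+b+c−e+1+n)_k · k!) and g(n,k) := ((b+c−e+a+n+1)(e+k−1) k / (c+n)) · f(n,k). Assume (e)_{k+1} ≠ 0, (a+b+c−e+1+n)_{k+1} ≠ 0, (a+b+c−e+2+n)_k ≠ 0, and c+n ≠ 0. Then (c−e+a+n+1)(b+c−e+n+1) f(n+1,k) − (c−e+n+1)(b+c−e+a+n+1) f(n,k) = g(n,k+1) − g(n,k). -/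

import Mathlib

open Complex

/-- Pochhammer symbol `(a)_k = a (a+1) ⋯ (a+k-1)`. -/
noncomputable def poch (a : ℂ) (k : ℕ) : ℂ := ∏ i ∈ Finset.range k, (a + i)

/-- The summand `f(n,k)` of the nonterminating Saalschützian series. -/
noncomputable def fS (a b c e : ℂ) (n k : ℕ) : ℂ :=
  poch a k * poch b k * poch (c + n) k /
    (poch e k * poch (a + b + c - e + 1 + n) k * (Nat.factorial k : ℂ))

/-- The certificate `g(n,k)`. -/
noncomputable def gS (a b c e : ℂ) (n k : ℕ) : ℂ :=
  (b + c - e + a + n + 1) * (e + k - 1) * k / (c + n) * fS a b c e n k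

lemma poch_succ (a : ℂ) (k : ℕ) : poch a (k + 1) = poch a k * (a + k) :=
  Finset.prod_range_succ _ _

lemma poch_succ' (a : ℂ) (k : ℕ) : poch a (k + 1) = a * poch (a + 1) k := by
  rw [poch, poch, Finset.prod_range_succ']
  push_cast
  rw [add_zero, mul_comm]
  exact congrArg (a * ·) (Finset.prod_congr rfl fun i _ => by ring)

lemma poch_shift (x : ℂ) (k : ℕ) : x * poch (x + 1) k = poch x k * (x + k) := by
  rw [← poch_succ', poch_succ]


lemma aux2 (Pa Pb Pc Pe PA FK u v w p q r : ℂ)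
    (hPe : Pe ≠ 0) (hPA : PA ≠ 0) (hFK : FK ≠ 0) (hp : p ≠ 0) (hq : q ≠ 0) (hr : r ≠ 0) :
    Pa * u * (Pb * v) * (Pc * w) / (Pe * p * (PA * q) * (r * FK)) =
      Pa * Pb * Pc / (Pe * PA * FK) * (u * v * w) / (p * q * r) := by
  field_simp

set_option maxHeartbeats 4000000 in
/-- Zeilberger recurrence for the nonterminating Saalschützian series. -/
theorem saalschutz_zeilberger (a b c e : ℂ) (n k : ℕ)
    (h1 : poch e (k + 1) ≠ 0)
    (h2 : poch (a + b + c - e + 1 + n) (k + 1) ≠ 0)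
    (h3 : poch (a + b + c - e + 2 + n) k ≠ 0)
    (h4 : c + (n : ℂ) ≠ 0) :
    (c - e + a + n + 1) * (b + c - e + n + 1) * fS a b c e (n + 1) k -
      (c - e + n + 1) * (b + c - e + a + n + 1) * fS a b c e n k =
    gS a b c e n (k + 1) - gS a b c e n k := by
  rw [poch_succ] at h1
  have hPe : poch e k ≠ 0 := fun h => h1 (by rw [h]; ring)
  have hek : e + (k : ℂ) ≠ 0 := fun h => h1 (by rw [h]; ring)
  have hPA : poch (a + b + c - e + 1 + n) k ≠ 0 := fun h => h2 (by rw [poch_succ, h]; ring)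
  have hAk : a + b + c - e + 1 + (n : ℂ) + k ≠ 0 := fun h => h2 (by rw [poch_succ, h]; ring)
  have hA0 : a + b + c - e + 1 + (n : ℂ) ≠ 0 := fun h => h2 (by rw [poch_succ', h]; ring)
  have h3' : poch (a + b + c - e + 1 + (n : ℂ) + 1) k ≠ 0 := by
    have hh : a + b + c - e + 2 + (n : ℂ) = a + b + c - e + 1 + n + 1 := by ring
    rwa [hh] at h3
  have hfk : ((Nat.factorial k : ℕ) : ℂ) ≠ 0 :=
    Nat.cast_ne_zero.mpr (Nat.factorial_ne_zero k)
  have hk1 : ((k : ℂ) + 1) ≠ 0 := by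
    have h : (((k + 1 : ℕ)) : ℂ) ≠ 0 := Nat.cast_ne_zero.mpr (Nat.succ_ne_zero k)
    push_cast at h; exact h
  have hc1 : (c + ((n + 1 : ℕ) : ℂ)) = c + n + 1 := by push_cast; ring
  have hA1 : (a + b + c - e + 1 + ((n + 1 : ℕ) : ℂ)) = a + b + c - e + 1 + n + 1 := by
    push_cast; ring
  have hPc1 : poch (c + (n : ℂ) + 1) k = poch (c + n) k * (c + n + k) / (c + n) := by
    rw [eq_div_iff h4]
    linear_combination poch_shift (c + (n : ℂ)) k
  have hPA1 : poch (a + b + c - e + 1 + (n : ℂ) + 1) k =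
      poch (a + b + c - e + 1 + n) k * (a + b + c - e + 1 + n + k) /
        (a + b + c - e + 1 + n) := by
    rw [eq_div_iff hA0]
    linear_combination poch_shift (a + b + c - e + 1 + (n : ℂ)) k
  have hf1 : fS a b c e (n + 1) k =
      fS a b c e n k * ((c + n + k) * (a + b + c - e + 1 + n)) /
        ((c + n) * (a + b + c - e + 1 + n + k)) := by
    rw [fS, fS, hc1, hA1, div_mul_eq_mul_div, div_div,
      div_eq_div_iff (mul_ne_zero (mul_ne_zero hPe h3') hfk)
        (mul_ne_zero (mul_ne_zero (mul_ne_zero hPe hPA) hfk) (mul_ne_zero h4 hAk))]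
    linear_combination
      (poch e k * ((Nat.factorial k : ℕ) : ℂ) * poch a k * poch b k *
          poch (a + b + c - e + 1 + n) k * (a + b + c - e + 1 + (n : ℂ) + k)) *
        poch_shift (c + (n : ℂ)) k -
      (poch e k * ((Nat.factorial k : ℕ) : ℂ) * poch a k * poch b k * poch (c + n) k *
          (c + (n : ℂ) + k)) * poch_shift (a + b + c - e + 1 + (n : ℂ)) k
  have hf2 : fS a b c e n (k + 1) =
      fS a b c e n k * ((a + k) * (b + k) * (c + n + k)) /
        ((e + k) * (a + b + c - e + 1 + n + k) * (k + 1)) := by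
    rw [fS, fS, poch_succ a, poch_succ b, poch_succ (c + n), poch_succ e,
      poch_succ (a + b + c - e + 1 + n), Nat.factorial_succ]
    push_cast
    exact aux2 _ _ _ _ _ _ _ _ _ _ _ _ hPe hPA hfk hek hAk hk1
  have hP : (c - e + a + n + 1) * (b + c - e + n + 1) *
        (((c + (n : ℂ) + k) * (a + b + c - e + 1 + n)) /
          ((c + n) * (a + b + c - e + 1 + n + k))) -
      (c - e + n + 1) * (b + c - e + a + n + 1) =
      (b + c - e + a + (n : ℂ) + 1) * (e + ((k : ℂ) + 1) - 1) * ((k : ℂ) + 1) / (c + n) *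
          (((a + k) * (b + k) * (c + n + k)) /
            ((e + k) * (a + b + c - e + 1 + n + k) * (k + 1))) -
        (b + c - e + a + n + 1) * (e + k - 1) * (k : ℂ) / (c + n) := by
    field_simp
    ring
  rw [hf1]
  simp only [gS, hf2]
  push_cast
  linear_combination fS a b c e n k * hP
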